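/- arXiv:1904.09541 — 3 statements merged into one kernel-verified Lean document; each statement's English description precedes it below -/
import Mathlib

section
/- (Kaloujnine–Krasner embedding theorem) Let G be a group and N a normal subgroup of G. Then G embeds into the unrestricted wreath product N ≀ (G/N), i.e., there exists an injective group homomorphism G → N ≀ (G/N). -/
def wreathAct (H G : Type*) [Group H] [Group G] : G →* MulAut (G → H) where
  toFun g :=
    { toFun := fun F x => F (g⁻¹ * x)
      invFun := fun F x => F (g * x)
      left_inv := fun F => by funext x; simp [mul_assoc]
      right_inv := fun F => by funext x; simp [mul_assoc]
      map_mul' := fun F₁ F₂ => rfl }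
  map_one' := by ext F x; simp
  map_mul' := fun g₁ g₂ => by ext F x; simp [mul_assoc]

/-- The unrestricted wreath product `H ≀ G = Hᴳ ⋊ G`. -/
abbrev Wreath (H G : Type*) [Group H] [Group G] := SemidirectProduct (G → H) G (wreathAct H G)

private lemma kk_mem {G : Type*} [Group G] (N : Subgroup G) [N.Normal]
    (g : G) (x : G ⧸ N) :
    x.out⁻¹ * g * (((g : G ⧸ N))⁻¹ * x).out ∈ N := by
  rw [← QuotientGroup.eq_one_iff]
  simp only [QuotientGroup.mk_mul, QuotientGroup.mk_inv, QuotientGroup.out_eq']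
  group

/-- **Kaloujnine–Krasner embedding theorem.** For a normal subgroup `N ⊴ G`, the group
`G` embeds into the unrestricted wreath product `N ≀ (G/N)`. -/
theorem stmt4 (G : Type*) [Group G] (N : Subgroup G) [N.Normal] :
    ∃ f : G →* Wreath N (G ⧸ N), Function.Injective f := by
  classical
  refine ⟨{ toFun := fun g =>
              ⟨fun x => ⟨x.out⁻¹ * g * (((g : G ⧸ N))⁻¹ * x).out, kk_mem N g x⟩, g⟩,
            map_one' := ?_, map_mul' := ?_ }, ?_⟩
  · ext x
    · simp
    · simp
  · intro g h
    ext x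
    · show x.out⁻¹ * (g * h) * ((((g * h : G) : G ⧸ N))⁻¹ * x).out
        = (x.out⁻¹ * g * ((((g : G) : G ⧸ N))⁻¹ * x).out) *
          (((((g : G) : G ⧸ N))⁻¹ * x).out⁻¹ * h *
            ((((h : G) : G ⧸ N))⁻¹ * ((((g : G) : G ⧸ N))⁻¹ * x)).out)
      simp only [QuotientGroup.mk_mul, mul_inv_rev, mul_assoc, mul_inv_cancel_left]
    · rfl
  · rw [injective_iff_map_eq_one]
    intro g hg
    have h2 : (g : G ⧸ N) = 1 := congrArg SemidirectProduct.right hg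
    have h1 := congrFun (congrArg SemidirectProduct.left hg) 1
    rw [Subtype.ext_iff] at h1
    simp only [MonoidHom.coe_mk, OneHom.coe_mk, SemidirectProduct.one_left, Pi.one_apply,
      OneMemClass.coe_one, h2, inv_one, one_mul] at h1
    have : (1 : G ⧸ N).out⁻¹ * g * (1 : G ⧸ N).out = 1 := h1
    have := congrArg (fun y => (1 : G ⧸ N).out * y * (1 : G ⧸ N).out⁻¹) this
    simpa [mul_assoc] using this
end

section
/- Let G = G₀ ⊳ G₁ ⊳ ⋯ ⊳ G_r = {1} be a subnormal series of a group G and let H_i := G_{i-1}/G_i be its successive quotients. Then G embeds (via an injective group homomorphism) into the iterated wreath product H_r ≀ H_{r-1} ≀ ⋯ ≀ H_1 (with left-nested parenthesization: (⋯(H_r ≀ H_{r-1}) ≀ H_{r-2} ⋯) ≀ H₁). -/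
/-- A group bundled with its group structure. -/
structure GroupBundle : Type 1 where
  carrier : Type
  [str : Group carrier]

attribute [instance] GroupBundle.str

/-- `iterWreathFrom W [A₁, …, Aₖ] = ((W ≀ A₁) ≀ A₂) ≀ ⋯ ≀ Aₖ` (left-nested). -/
def iterWreathFrom : GroupBundle → List GroupBundle → GroupBundle
  | W, [] => W
  | W, A :: rest => iterWreathFrom ⟨Wreath W.carrier A.carrier⟩ rest

/-- The left-nested iterated wreath product of a list of groups:
`[H₁, H₂, …, Hₖ] ↦ ((H₁ ≀ H₂) ≀ H₃) ≀ ⋯ ≀ Hₖ`, the trivial group for the empty list. -/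
def iterWreathList : List GroupBundle → GroupBundle
  | [] => ⟨PUnit⟩
  | A :: rest => iterWreathFrom A rest

open Function
section Aux
open scoped Classical

variable {H H' Q Q' : Type*} [Group H] [Group H'] [Group Q] [Group Q']

noncomputable def extendFun (φ : Q →* Q') (F : Q → H) : Q' → H :=
  fun x => if h : ∃ y, φ y = x then F h.choose else 1

lemma extendFun_apply (φ : Q →* Q') (hφ : Injective φ) (F : Q → H) (y : Q) :
    extendFun φ F (φ y) = F y := by
  have h : ∃ z, φ z = φ y := ⟨y, rfl⟩
  simp only [extendFun, dif_pos h]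
  exact congrArg F (hφ h.choose_spec)

lemma extendFun_apply_of_not (φ : Q →* Q') (F : Q → H) {x : Q'} (h : ¬ ∃ y, φ y = x) :
    extendFun φ F x = 1 := dif_neg h

lemma extendFun_mul (φ : Q →* Q') (F F' : Q → H) :
    extendFun φ (F * F') = extendFun φ F * extendFun φ F' := by
  funext x
  by_cases h : ∃ y, φ y = x <;> simp [extendFun, h]

noncomputable def wreathMapRight (φ : Q →* Q') (hφ : Injective φ) :
    Wreath H Q →* Wreath H Q' where
  toFun w := ⟨extendFun φ w.left, φ w.right⟩
  map_one' := by
    refine SemidirectProduct.ext ?_ (by simp)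
    show extendFun φ (1 : Q → H) = 1
    funext x
    by_cases h : ∃ y, φ y = x <;> simp [extendFun, h]
  map_mul' := fun a b => by
    refine SemidirectProduct.ext ?_ (by simp [SemidirectProduct.mul_right])
    show extendFun φ (a * b).left = (extendFun φ a.left) * (wreathAct H Q' (φ a.right)) (extendFun φ b.left)
    rw [SemidirectProduct.mul_left, extendFun_mul]
    congr 1
    funext x
    show extendFun φ ((wreathAct H Q a.right) b.left) x = extendFun φ b.left ((φ a.right)⁻¹ * x)
    by_cases h : ∃ y, φ y = x
    · obtain ⟨y, rfl⟩ := h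
      have h2 : (φ a.right)⁻¹ * φ y = φ (a.right⁻¹ * y) := by simp
      rw [extendFun_apply φ hφ _ y, h2, extendFun_apply φ hφ _ (a.right⁻¹ * y)]
      rfl
    · have h2 : ¬ ∃ y, φ y = (φ a.right)⁻¹ * x := by
        rintro ⟨y, hy⟩
        exact h ⟨a.right * y, by rw [map_mul, hy]; group⟩
      rw [extendFun_apply_of_not φ _ h, extendFun_apply_of_not φ _ h2]

lemma wreathMapRight_injective (φ : Q →* Q') (hφ : Injective φ) :
    Injective (wreathMapRight (H := H) φ hφ) := by
  intro a b hab
  have h1 : extendFun φ a.left = extendFun φ b.left := congrArg SemidirectProduct.left hab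
  have h2 : φ a.right = φ b.right := congrArg SemidirectProduct.right hab
  refine SemidirectProduct.ext ?_ (hφ h2)
  funext y
  have := congrFun h1 (φ y)
  rwa [extendFun_apply φ hφ, extendFun_apply φ hφ] at this

def wreathMapLeft (χ : H →* H') : Wreath H Q →* Wreath H' Q where
  toFun w := ⟨χ ∘ w.left, w.right⟩
  map_one' := by
    refine SemidirectProduct.ext ?_ (by simp)
    funext x
    simp [SemidirectProduct.one_left]
  map_mul' := fun a b => by
    refine SemidirectProduct.ext ?_ (by simp [SemidirectProduct.mul_right])
    funext x
    show χ ((a * b).left x) = _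
    rw [SemidirectProduct.mul_left]
    exact map_mul χ _ _

lemma wreathMapLeft_injective (χ : H →* H') (hχ : Injective χ) :
    Injective (wreathMapLeft (Q := Q) χ) := by
  intro a b hab
  have h1 := congrArg SemidirectProduct.left hab
  have h2 := congrArg SemidirectProduct.right hab
  refine SemidirectProduct.ext ?_ h2
  funext y
  exact hχ (congrFun h1 y)

end Aux

section KK

open Function QuotientGroup

variable {G : Type*} [Group G]

noncomputable def kkFun (N : Subgroup G) [N.Normal] (g : G) (x : G ⧸ N) : ↥N :=
  ⟨(Quotient.out x)⁻¹ * g * Quotient.out (((g : G ⧸ N))⁻¹ * x), by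
    rw [← QuotientGroup.eq_one_iff]
    simp only [QuotientGroup.mk_mul, QuotientGroup.mk_inv, QuotientGroup.out_eq']
    group⟩

noncomputable def kkEmbed (N : Subgroup G) [N.Normal] : G →* Wreath (↥N) (G ⧸ N) where
  toFun g := ⟨kkFun N g, (g : G ⧸ N)⟩
  map_one' := by
    refine SemidirectProduct.ext ?_ (by simp)
    funext x
    refine Subtype.ext ?_
    show (Quotient.out x)⁻¹ * 1 * Quotient.out ((((1:G) : G ⧸ N))⁻¹ * x) = 1
    simp
  map_mul' := fun g h => by
    refine SemidirectProduct.ext ?_ (by simp)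
    funext x
    refine Subtype.ext ?_
    show (Quotient.out x)⁻¹ * (g * h) * Quotient.out ((((g*h:G) : G ⧸ N))⁻¹ * x)
      = ((Quotient.out x)⁻¹ * g * Quotient.out (((g : G ⧸ N))⁻¹ * x))
        * ((Quotient.out (((g : G ⧸ N))⁻¹ * x))⁻¹ * h
            * Quotient.out (((h : G ⧸ N))⁻¹ * (((g : G ⧸ N))⁻¹ * x)))
    have harg : (((g*h:G) : G ⧸ N))⁻¹ * x = ((h : G ⧸ N))⁻¹ * (((g : G ⧸ N))⁻¹ * x) := by
      rw [QuotientGroup.mk_mul, mul_inv_rev, mul_assoc]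
    rw [harg]
    group

lemma kkEmbed_injective (N : Subgroup G) [N.Normal] : Injective (kkEmbed N) := by
  refine (injective_iff_map_eq_one _).2 ?_
  intro g hg
  have h2 : (g : G ⧸ N) = 1 := congrArg SemidirectProduct.right hg
  have h1 := congrArg Subtype.val (congrFun (congrArg SemidirectProduct.left hg) (1 : G ⧸ N))
  have h1' : (Quotient.out (1 : G ⧸ N))⁻¹ * g * Quotient.out (((g : G ⧸ N))⁻¹ * (1 : G ⧸ N)) = 1 := h1
  rw [h2, inv_one, one_mul] at h1'
  have hgeq : g = Quotient.out (1 : G ⧸ N)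
      * ((Quotient.out (1 : G ⧸ N))⁻¹ * g * Quotient.out (1 : G ⧸ N))
      * (Quotient.out (1 : G ⧸ N))⁻¹ := by group
  rw [h1'] at hgeq
  simpa using hgeq

lemma quotLift {H : Type*} [Group H] (N : Subgroup G) [N.Normal] (φ : G →* H)
    (hker : ∀ g, φ g = 1 ↔ g ∈ N) :
    ∃ f : G ⧸ N →* H, Injective f ∧ ∀ g : G, f (g : G ⧸ N) = φ g := by
  refine ⟨QuotientGroup.lift N φ (fun g hg => (hker g).2 hg), ?_, fun g => rfl⟩
  intro a b hab
  obtain ⟨a, rfl⟩ := QuotientGroup.mk_surjective a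
  obtain ⟨b, rfl⟩ := QuotientGroup.mk_surjective b
  have hab' : φ a = φ b := hab
  refine (QuotientGroup.eq).2 ?_
  refine (hker _).1 ?_
  rw [map_mul, map_inv, hab']
  group

lemma subgroupOf_subgroupOf_normal {A C : Subgroup G} (N : Subgroup G)
    (h : (A.subgroupOf C).Normal) :
    ((A.subgroupOf N).subgroupOf (C.subgroupOf N)).Normal := by
  constructor
  intro x hx g
  simp only [Subgroup.mem_subgroupOf] at hx ⊢
  have hxC : ((x : ↥N) : G) ∈ C := Subgroup.mem_subgroupOf.mp x.2
  have hgC : ((g : ↥N) : G) ∈ C := Subgroup.mem_subgroupOf.mp g.2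
  have key := h.conj_mem ⟨((x : ↥N) : G), hxC⟩ (Subgroup.mem_subgroupOf.mpr hx) ⟨((g : ↥N) : G), hgC⟩
  rw [Subgroup.mem_subgroupOf] at key
  exact key

lemma quotEmbed {A C : Subgroup G} (N : Subgroup G) (hAC : (A.subgroupOf C).Normal) :
    letI := hAC
    letI := subgroupOf_subgroupOf_normal N hAC
    ∃ f : (↥(C.subgroupOf N) ⧸ ((A.subgroupOf N).subgroupOf (C.subgroupOf N))) →* (↥C ⧸ A.subgroupOf C),
      Injective f := by
  letI := hAC
  letI := subgroupOf_subgroupOf_normal N hAC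
  let inc : ↥(C.subgroupOf N) →* ↥C :=
    { toFun := fun x => ⟨((x : ↥N) : G), Subgroup.mem_subgroupOf.mp x.2⟩
      map_one' := rfl
      map_mul' := fun a b => rfl }
  have hker : ∀ x, ((QuotientGroup.mk' (A.subgroupOf C)).comp inc) x = 1 ↔
      x ∈ (A.subgroupOf N).subgroupOf (C.subgroupOf N) := by
    intro x
    rw [MonoidHom.comp_apply]
    rw [show (QuotientGroup.mk' (A.subgroupOf C)) (inc x) = ((inc x : ↥C) : ↥C ⧸ A.subgroupOf C) from rfl]
    rw [QuotientGroup.eq_one_iff]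
    simp only [Subgroup.mem_subgroupOf]
    rfl
  obtain ⟨f, hf, -⟩ := quotLift ((A.subgroupOf N).subgroupOf (C.subgroupOf N))
    ((QuotientGroup.mk' (A.subgroupOf C)).comp inc) hker
  exact ⟨f, hf⟩

end KK


section Append

open Function

lemma iterWreathFrom_append (l : List GroupBundle) (W Q : GroupBundle) :
    iterWreathFrom W (l ++ [Q]) = ⟨Wreath (iterWreathFrom W l).carrier Q.carrier⟩ := by
  induction l generalizing W with
  | nil => rfl
  | cons A l ih => exact ih ⟨Wreath W.carrier A.carrier⟩

lemma iterWreathList_append (l : List GroupBundle) (Q : GroupBundle) :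
    ∃ g : Wreath (iterWreathList l).carrier Q.carrier →* (iterWreathList (l ++ [Q])).carrier,
      Injective g := by
  cases l with
  | nil =>
    show ∃ g : Wreath PUnit Q.carrier →* Q.carrier, Injective g
    refine ⟨SemidirectProduct.rightHom, ?_⟩
    intro a b h
    exact SemidirectProduct.ext (Subsingleton.elim _ _) h
  | cons A l =>
    show ∃ g : Wreath (iterWreathFrom A l).carrier Q.carrier →* (iterWreathFrom A (l ++ [Q])).carrier,
      Injective g
    rw [iterWreathFrom_append]
    exact ⟨MonoidHom.id _, fun _ _ h => h⟩

end Append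

open Function in
theorem mainThm (r : ℕ) : ∀ (G : Type) [Group G] (s : Fin (r + 1) → Subgroup G)
    (_ : s 0 = ⊤) (_ : s (Fin.last r) = ⊥)
    (hnorm : ∀ i : Fin r, ((s i.succ).subgroupOf (s i.castSucc)).Normal)
    (B : Fin r → GroupBundle)
    (e : ∀ i : Fin r, letI := hnorm i;
      (↥(s i.castSucc) ⧸ (s i.succ).subgroupOf (s i.castSucc)) →* (B i).carrier),
    (∀ i, Function.Injective (e i)) →
    ∃ f : G →* (iterWreathList (List.ofFn B).reverse).carrier, Function.Injective f := by
  induction r with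
  | zero =>
    intro G _ s h0 hr hnorm B e he
    have hGsub : Subsingleton G := by
      constructor
      intro a b
      have h1 : ∀ c : G, c ∈ (⊥ : Subgroup G) := by
        intro c
        rw [← hr, show Fin.last 0 = 0 from rfl, h0]
        trivial
      have ha := Subgroup.mem_bot.mp (h1 a)
      have hb := Subgroup.mem_bot.mp (h1 b)
      rw [ha, hb]
    exact ⟨1, fun a b _ => Subsingleton.elim a b⟩
  | succ r IH =>
    intro G _ s h0 hr hnorm B e he
    have hnorm0 := hnorm 0
    rw [Fin.castSucc_zero, h0] at hnorm0
    haveI hNnorm : (s ((0 : Fin (r+1)).succ)).Normal := by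
      constructor
      intro n hn g
      have key := hnorm0.conj_mem ⟨n, trivial⟩ (by rwa [Subgroup.mem_subgroupOf]) ⟨g, trivial⟩
      rwa [Subgroup.mem_subgroupOf] at key
    -- abbreviation
    have hrN : s ((Fin.last r).succ) = ⊥ := by rw [Fin.succ_last]; exact hr
    -- inner series
    obtain ⟨q, hq⟩ := Classical.axiomOfChoice
      (fun j : Fin r => quotEmbed (s ((0 : Fin (r+1)).succ)) (hnorm j.succ))
    -- IH applied to N
    obtain ⟨ι, hι⟩ := IH (↥(s ((0 : Fin (r+1)).succ)))
      (fun j : Fin (r+1) => (s j.succ).subgroupOf (s ((0 : Fin (r+1)).succ)))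
      (Subgroup.subgroupOf_self _)
      (by show (s (Fin.last r).succ).subgroupOf _ = ⊥
          rw [hrN]; exact Subgroup.bot_subgroupOf _)
      (fun j => subgroupOf_subgroupOf_normal _ (hnorm j.succ))
      (fun j => B j.succ)
      (fun j =>
        letI : (((s j.succ.succ).subgroupOf (s ((0 : Fin (r+1)).succ))).subgroupOf
            ((s j.castSucc.succ).subgroupOf (s ((0 : Fin (r+1)).succ)))).Normal :=
          subgroupOf_subgroupOf_normal _ (hnorm j.succ);
        letI := hnorm j.succ; (e j.succ).comp (q j))
      (fun j => (he j.succ).comp (hq j))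
    -- quotient map to (B 0).carrier
    letI := hnorm 0
    let j0 : G →* ↥(s ((0 : Fin (r+1)).castSucc)) :=
      { toFun := fun g => ⟨g, by rw [Fin.castSucc_zero, h0]; trivial⟩
        map_one' := rfl
        map_mul' := fun _ _ => rfl }
    obtain ⟨ψ0, hψ0, -⟩ := quotLift (s ((0 : Fin (r+1)).succ))
      ((QuotientGroup.mk' ((s ((0 : Fin (r+1)).succ)).subgroupOf (s ((0 : Fin (r+1)).castSucc)))).comp j0)
      (by
        intro g
        rw [MonoidHom.comp_apply,
          show (QuotientGroup.mk' ((s ((0 : Fin (r+1)).succ)).subgroupOf (s ((0 : Fin (r+1)).castSucc)))) (j0 g)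
            = ((j0 g : ↥(s ((0 : Fin (r+1)).castSucc))) : _ ⧸ ((s ((0 : Fin (r+1)).succ)).subgroupOf (s ((0 : Fin (r+1)).castSucc)))) from rfl,
          QuotientGroup.eq_one_iff, Subgroup.mem_subgroupOf]
        exact Iff.rfl)
    -- assemble
    obtain ⟨g4, hg4⟩ := iterWreathList_append (List.ofFn fun j : Fin r => B j.succ).reverse (B 0)
    have hlist : (List.ofFn B).reverse = (List.ofFn fun j : Fin r => B j.succ).reverse ++ [B 0] := by
      rw [List.ofFn_succ, List.reverse_cons]
    rw [hlist]
    have hψ : Function.Injective ⇑((e 0).comp ψ0) := fun a b hab => hψ0 ((he 0) hab)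
    refine ⟨g4.comp ((wreathMapRight ((e 0).comp ψ0) hψ).comp
      ((wreathMapLeft ι).comp (kkEmbed (s ((0 : Fin (r+1)).succ))))), ?_⟩
    intro a b hab
    simp only [MonoidHom.comp_apply] at hab
    exact kkEmbed_injective _
      (wreathMapLeft_injective ι hι (wreathMapRight_injective _ hψ (hg4 hab)))

/-- Given a subnormal series `G = G₀ ⊳ G₁ ⊳ ⋯ ⊳ G_r = 1` with successive quotients
`Hᵢ = G_{i-1}/Gᵢ`, the group `G` embeds into the left-nested iterated wreath product
`H_r ≀ H_{r-1} ≀ ⋯ ≀ H₁ = (⋯((H_r ≀ H_{r-1}) ≀ H_{r-2})⋯) ≀ H₁`. -/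
theorem stmt5 (G : Type) [Group G] (r : ℕ) (s : Fin (r + 1) → Subgroup G)
    (h0 : s 0 = ⊤) (hr : s (Fin.last r) = ⊥)
    (hnorm : ∀ i : Fin r, ((s i.succ).subgroupOf (s i.castSucc)).Normal) :
    ∃ f : G →*
        (iterWreathList
          ((List.ofFn fun i : Fin r =>
            (letI := hnorm i;
              (⟨↥(s i.castSucc) ⧸ (s i.succ).subgroupOf (s i.castSucc)⟩ : GroupBundle)))).reverse).carrier,
      Function.Injective f := by
  exact mainThm r G s h0 hr hnorm
    (fun i => letI := hnorm i;
      ⟨↥(s i.castSucc) ⧸ (s i.succ).subgroupOf (s i.castSucc)⟩)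
    (fun i => letI := hnorm i; MonoidHom.id _)
    (fun i a b h => h)
end

section
/- For any finite solvable group G, there exist prime numbers p₁, …, p_r such that G embeds into the iterated wreath product Z_{p₁} ≀ Z_{p₂} ≀ ⋯ ≀ Z_{p_r}, where Z_p denotes the cyclic group of order p. -/
/-!
Induction on `|G|`. A nontrivial finite solvable group has a nontrivial abelianization, hence a
surjection `π` onto some `Z_p`. By induction `ker π` embeds in an iterated wreath product `W` of
cyclic groups of prime order, and the Kaloujnine–Krasner embedding `G ↪ ker π ≀ Z_p` then puts `G`
inside `W ≀ Z_p`, which is the iterated wreath product of one more factor.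
-/

open Function

section KaloujnineKrasner

variable {G Q W : Type*} [Group G] [Group Q] [Group W] {π : G →* Q} {s : Q → G}

lemma inv_mul_mul_mem_ker (hs : RightInverse s π) (g : G) (q : Q) :
    (s q)⁻¹ * g * s ((π g)⁻¹ * q) ∈ π.ker := by
  simp [MonoidHom.mem_ker, hs _]

/-- The `q`-coordinate `k ∈ ker π` of `g` is defined by `g * s ((π g)⁻¹ * q) = s q * k`. -/
def kaloujnineKrasner (hs : RightInverse s π) (ι : π.ker →* W) : G →* Wreath W Q where
  toFun g := ⟨fun q => ι ⟨(s q)⁻¹ * g * s ((π g)⁻¹ * q), inv_mul_mul_mem_ker hs g q⟩, π g⟩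
  map_one' := by
    ext q
    · exact (congrArg ι (Subtype.ext (by simp))).trans (map_one ι)
    · simp
  map_mul' g h := by
    ext q
    · refine (congrArg ι (Subtype.ext ?_)).trans (map_mul ι _ _)
      simp only [map_mul, mul_inv_rev, Subgroup.coe_mul]
      group
    · simp

lemma kaloujnineKrasner_injective (hs : RightInverse s π) {ι : π.ker →* W}
    (hι : Injective ι) : Injective (kaloujnineKrasner hs ι) := by
  rw [injective_iff_map_eq_one]
  intro g hg
  have hπg : π g = 1 := congrArg SemidirectProduct.right hg
  have hleft : ι ⟨(s 1)⁻¹ * g * s ((π g)⁻¹ * 1), inv_mul_mul_mem_ker hs g 1⟩ = ι 1 :=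
    (congrFun (congrArg SemidirectProduct.left hg) 1).trans (map_one ι).symm
  have hconj : (s 1)⁻¹ * g * s 1 = 1 := by
    simpa [hπg] using congrArg Subtype.val (hι hleft)
  rw [mul_assoc, inv_mul_eq_one] at hconj
  simpa using hconj.symm

theorem exists_injective_wreath_of_ker (hπ : Surjective π) {ι : π.ker →* W}
    (hι : Injective ι) : ∃ f : G →* Wreath W Q, Injective f :=
  ⟨_, kaloujnineKrasner_injective (rightInverse_surjInv hπ) hι⟩

end KaloujnineKrasner

theorem CommGroup.exists_surjective_multiplicative_zmod (A : Type*) [CommGroup A] [Finite A]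
    [Nontrivial A] : ∃ p : ℕ, p.Prime ∧ ∃ π : A →* Multiplicative (ZMod p), Surjective π := by
  obtain ⟨ι, _, n, hn, ⟨e⟩⟩ := CommGroup.equiv_prod_multiplicative_zmod_of_finite A
  obtain ⟨i⟩ : Nonempty ι := by
    by_contra hι
    rw [not_nonempty_iff] at hι
    exact not_subsingleton A e.injective.subsingleton
  let p := (n i).minFac
  let reduce := ZMod.castHom (Nat.minFac_dvd (n i)) (ZMod p)
  exact ⟨p, Nat.minFac_prime (hn i).ne',
    reduce.toAddMonoidHom.toMultiplicative.comp ((Pi.evalMonoidHom _ i).comp e.toMonoidHom),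
    (ZMod.ringHom_surjective reduce).comp ((surjective_eval i).comp e.surjective)⟩

theorem Group.IsSolvable.exists_surjective_multiplicative_zmod (G : Type*) [Group G] [Finite G]
    [Nontrivial G] [Group.IsSolvable G] :
    ∃ p : ℕ, p.Prime ∧ ∃ π : G →* Multiplicative (ZMod p), Surjective π := by
  have : Nontrivial (Abelianization G) :=
    QuotientGroup.nontrivial_iff.mpr (Group.IsSolvable.commutator_lt_top_of_nontrivial G).ne
  obtain ⟨p, hp, π, hπ⟩ := CommGroup.exists_surjective_multiplicative_zmod (Abelianization G)
  exact ⟨p, hp, π.comp Abelianization.of, hπ.comp (QuotientGroup.mk'_surjective _)⟩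

theorem MonoidHom.card_ker_lt_of_surjective {G H : Type*} [Group G] [Group H] [Finite G]
    [Nontrivial H] {f : G →* H} (hf : Surjective f) : Nat.card f.ker < Nat.card G := by
  refine (Subgroup.card_le_card_group _).lt_of_ne fun h => ?_
  obtain ⟨y, hy⟩ := exists_ne (1 : H)
  obtain ⟨x, rfl⟩ := hf y
  exact hy (((Subgroup.card_eq_iff_eq_top _).mp h).symm ▸ Subgroup.mem_top x : x ∈ f.ker)

abbrev cyclicBundle (p : ℕ) : GroupBundle := ⟨Multiplicative (ZMod p)⟩

lemma iterWreathFrom_append_singleton (W A : GroupBundle) : ∀ l : List GroupBundle,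
    iterWreathFrom W (l ++ [A]) = ⟨Wreath (iterWreathFrom W l).carrier A.carrier⟩
  | [] => rfl
  | _ :: l => iterWreathFrom_append_singleton _ A l

theorem exists_injective_wreath_iterWreathList_append (l : List GroupBundle) (A : GroupBundle) :
    ∃ f : Wreath (iterWreathList l).carrier A.carrier →* (iterWreathList (l ++ [A])).carrier,
      Injective f := by
  cases l with
  | nil =>
    refine ⟨SemidirectProduct.rightHom, fun x y hxy => SemidirectProduct.ext ?_ hxy⟩
    funext a
    exact Subsingleton.elim (α := PUnit) _ _
  | cons B l =>
    show ∃ f : _ →* (iterWreathFrom B (l ++ [A])).carrier, Injective f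
    rw [iterWreathFrom_append_singleton]
    exact ⟨MonoidHom.id _, injective_id⟩

theorem Group.IsSolvable.exists_injective_iterWreathList_cyclic (G : Type) [Group G] [Finite G]
    [Group.IsSolvable G] : ∃ ps : List ℕ, (∀ q ∈ ps, q.Prime) ∧
      ∃ f : G →* (iterWreathList (ps.map cyclicBundle)).carrier, Injective f := by
  induction h : Nat.card G using Nat.strong_induction_on generalizing G with
  | _ n ih =>
  subst h
  rcases subsingleton_or_nontrivial G with _ | _
  · exact ⟨[], by simp, 1, injective_of_subsingleton _⟩
  obtain ⟨p, hp, π, hπ⟩ := Group.IsSolvable.exists_surjective_multiplicative_zmod G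
  have : Fact p.Prime := ⟨hp⟩
  obtain ⟨ps, hps, ι, hι⟩ := ih _ (MonoidHom.card_ker_lt_of_surjective hπ) π.ker rfl
  obtain ⟨κ, hκ⟩ := exists_injective_wreath_of_ker hπ hι
  obtain ⟨ε, hε⟩ :=
    exists_injective_wreath_iterWreathList_append (ps.map cyclicBundle) (cyclicBundle p)
  refine ⟨ps ++ [p], ?_, ?_⟩
  · simpa [or_imp, forall_and] using ⟨hps, hp⟩
  · rw [List.map_append, List.map_singleton]
    exact ⟨ε.comp κ, hε.comp hκ⟩

/-- For any finite solvable group `G`, there exist prime numbers `p₁, …, p_r` such that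
`G` embeds into the left-nested iterated wreath product `Z_{p₁} ≀ Z_{p₂} ≀ ⋯ ≀ Z_{p_r}`
of cyclic groups of prime order. -/
theorem stmt6 (G : Type) [Group G] [Finite G] (hsolv : IsSolvable G) :
    ∃ (r : ℕ) (p : Fin r → ℕ), (∀ i, (p i).Prime) ∧
      ∃ f : G →*
          (iterWreathList
            (List.ofFn fun i : Fin r =>
              (⟨Multiplicative (ZMod (p i))⟩ : GroupBundle))).carrier,
        Function.Injective f := by
  have : Group.IsSolvable G := hsolv
  obtain ⟨ps, hps, f, hf⟩ := Group.IsSolvable.exists_injective_iterWreathList_cyclic G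
  refine ⟨ps.length, fun i => ps[(i : ℕ)], fun i => hps _ (List.getElem_mem _), ?_⟩
  exact List.ofFn_getElem_eq_map ps cyclicBundle ▸ ⟨f, hf⟩
end
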